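/- Two processes s and t are testing equivalent if and only if they are probabilistically ready trace equivalent: s ≈_T t ⟺ s ≈_O t. -/

import Mathlib

inductive Proc (A : Type) where
  | nd : List (A × Proc A) → Proc A
  | pr : List (ℝ × Proc A) → Proc A

namespace Proc

variable {A : Type} [DecidableEq A]

/-- The menu of a nondeterministic state: the set of initially enabled actions. -/
def menu : Proc A → Finset A
  | nd l => (l.map Prod.fst).toFinset
  | pr _ => ∅

/-- Deterministic action transition. -/
def step : Proc A → A → Option (Proc A)
  | nd l, a => (l.find? (fun x => x.1 = a)).map Prod.snd
  | pr _, _ => none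

/-- P¹ₛ(M) : the probability that the initial menu observed is M. -/
noncomputable def P1 : Proc A → Finset A → ℝ
  | nd l, M => if (l.map Prod.fst).toFinset = M then 1 else 0
  | pr l, M => (l.attach.map (fun x => x.1.1 * P1 x.1.2 M)).sum
termination_by p _ => sizeOf p
decreasing_by
  obtain ⟨⟨r, p⟩, hmem⟩ := x
  have h := List.sizeOf_lt_of_mem hmem
  simp at h ⊢
  omega

end Proc
/-- Flattening used when a probabilistic transition would lead to a probabilistic state. -/
def flat {A : Type} (w : ℝ) : Proc A → List (ℝ × Proc A)
  | Proc.pr l => l.map (fun x => (w * x.1, x.2))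
  | q => [(w, q)]

namespace Proc

variable {A : Type} [DecidableEq A]

/-- The derived process s_{(M,a)} : the process that `s` becomes, given that the
menu `M` was offered and the action `a ∈ M` was performed. -/
noncomputable def after : Proc A → Finset A → A → Option (Proc A)
  | nd l, M, a => if (l.map Prod.fst).toFinset = M then step (nd l) a else none
  | pr l, M, a =>
      let sel := l.filter (fun x => x.2.menu = M)
      let tot := (sel.map Prod.fst).sum
      let entries := sel.flatMap (fun x =>
        match x.2.step a with
        | none => []
        | some q => flat (x.1 / tot) q)
      if entries.isEmpty then none else some (pr entries)

/-- The conditional ready-trace probability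
`P_sⁿ(M | M₁,a₁,…,a_{n-1})`, where `none` represents undefinedness. -/
noncomputable def Pn : Proc A → List (Finset A × A) → Finset A → Option ℝ
  | s, [], M => some (P1 s M)
  | s, Ma :: rest, M =>
      if 0 < P1 s Ma.1 then (after s Ma.1 Ma.2).bind (fun s' => Pn s' rest M)
      else none

/-- Probabilistic ready trace equivalence `≈_O`. -/
noncomputable def RTEquiv (s t : Proc A) : Prop :=
  ∀ (tr : List (Finset A × A)) (M : Finset A), Pn s tr M = Pn t tr M

/-- Well-formed process graphs: action-deterministic menus, probabilities in (0,1]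
summing to one, and probabilistic transitions leading to nondeterministic states. -/
inductive WF : Proc A → Prop
  | nd (l : List (A × Proc A)) :
      (l.map Prod.fst).Nodup → (∀ x ∈ l, WF x.2) → WF (.nd l)
  | pr (l : List (ℝ × Proc A)) :
      (∀ x ∈ l, 0 < x.1 ∧ x.1 ≤ 1 ∧ ∃ l', x.2 = Proc.nd l') →
      (l.map Prod.fst).sum = 1 →
      (∀ x ∈ l, WF x.2) → WF (.pr l)

end Proc
/-- The field of rational functions whose argument names are the action labels. -/
abbrev RF (A : Type) := FractionRing (MvPolynomial A ℝ)

/-- The rational function consisting of the single variable named by action `a`. -/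
noncomputable def RVar {A : Type} (a : A) : RF A :=
  algebraMap (MvPolynomial A ℝ) (RF A) (MvPolynomial.X a)

namespace Proc

variable {A : Type} [DecidableEq A]

/-- A state can immediately report success. -/
def hasOmega (ω : A) : Proc A → Prop
  | nd l => ω ∈ l.map Prod.fst
  | pr _ => False

/-- `ResRel ω s T r` : the result of testing process `s` with test `T` is the
rational function `r` (ω is the success action of tests). -/
inductive ResRel (ω : A) : Proc A → Proc A → RF A → Prop
  | success (s : Proc A) (l : List (A × Proc A)) (h : ω ∈ l.map Prod.fst) :
      ResRel ω s (.nd l) 1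
  | probL (l : List (ℝ × Proc A)) (T : Proc A) (r : ℝ × Proc A → RF A)
      (hT : ¬ hasOmega ω T)
      (h : ∀ x ∈ l, ResRel ω x.2 T (r x)) :
      ResRel ω (.pr l) T ((l.map (fun x => algebraMap ℝ (RF A) x.1 * r x)).sum)
  | probR (l : List (A × Proc A)) (l' : List (ℝ × Proc A)) (r : ℝ × Proc A → RF A)
      (h : ∀ x ∈ l', ResRel ω (.nd l) x.2 (r x)) :
      ResRel ω (.nd l) (.pr l') ((l'.map (fun x => algebraMap ℝ (RF A) x.1 * r x)).sum)
  | sync (l l' : List (A × Proc A)) (r : A → RF A)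
      (hω : ω ∉ l'.map Prod.fst)
      (h : ∀ a ∈ (l.map Prod.fst).toFinset ∩ (l'.map Prod.fst).toFinset,
        ∀ sa Ta, Proc.step (.nd l) a = some sa → Proc.step (.nd l') a = some Ta →
          ResRel ω sa Ta (r a)) :
      ResRel ω (.nd l) (.nd l')
        (∑ a ∈ (l.map Prod.fst).toFinset ∩ (l'.map Prod.fst).toFinset,
          (RVar a / ∑ b ∈ (l.map Prod.fst).toFinset ∩ (l'.map Prod.fst).toFinset, RVar b) * r a)

/-- Testing equivalence `≈_T` : equal testing results for every test. -/
def TestEquiv (ω : A) (s t : Proc A) : Prop :=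
  ∀ T : Proc A, WF T → ∀ r : RF A, (ResRel ω s T r ↔ ResRel ω t T r)

/-- Processes (as opposed to tests) never perform the success action ω. -/
inductive NoOmega (ω : A) : Proc A → Prop
  | nd (l : List (A × Proc A)) :
      ω ∉ l.map Prod.fst → (∀ x ∈ l, NoOmega ω x.2) → NoOmega ω (.nd l)
  | pr (l : List (ℝ × Proc A)) :
      (∀ x ∈ l, NoOmega ω x.2) → NoOmega ω (.pr l)

/-- Processes with no probabilistic transitions at all. -/
inductive NoProb : Proc A → Prop
  | nd (l : List (A × Proc A)) : (∀ x ∈ l, NoProb x.2) → NoProb (.nd l)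

end Proc

/-!
Both equivalences are compared through the testing result `res ω s T`, a rational function of
the action variables. Against a nondeterministic test with menu `N` and no success, a
well-formed process draws a ready menu `M` with probability `P1 s M`, the synchronisation picks
`a ∈ M ∩ N` with weight `a / ∑_{b ∈ M ∩ N} b`, and testing continues with the derived process
`s_{(M,a)}`. Hence ready-trace equivalent processes have the same results, by induction on the
test.

Conversely, the probe `a.T' + ∑_{b ∈ K} b.0` has result
`∑_{M ∋ a} c_M · a / (a + ∑_{b ∈ M ∩ K} b)` with `c_M = P1 s M · res (s_{(M,a)}) T'`.
Alternating sums over `K ⊆ D` isolate `∑_{M ⊇ D} c_M`, multiplied by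
`∑_{K ⊆ D} (-1)^|K| a / (a + ∑_{b ∈ K} b)`, which is nonzero because it takes the value
`1 / (|D| + 1)` at `(1, …, 1)`. Möbius inversion then shows that the results of the probes
determine every `c_M`. So testing equivalent processes have the same menu probabilities and
testing equivalent derived processes, and induction on the trace gives ready-trace equivalence.
-/

namespace List

variable {α β M : Type*} [AddCommMonoid M]

theorem sum_map_sum_map_comm (l : List α) (l' : List β) (f : α → β → M) :
    (l.map fun x => (l'.map (f x)).sum).sum = (l'.map fun y => (l.map (f · y)).sum).sum := by
  simpa using Multiset.sum_map_sum_map (l : Multiset α) (l' : Multiset β) (f := f)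

theorem sum_map_finset_sum_comm (l : List α) (s : Finset β) (f : α → β → M) :
    (l.map fun x => ∑ i ∈ s, f x i).sum = ∑ i ∈ s, (l.map (f · i)).sum := by
  induction l with
  | nil => simp
  | cons x l ih => simp [ih, Finset.sum_add_distrib]

theorem sum_map_eq_sum_fiberwise [DecidableEq β] {l : List α} {s : Finset β} {g : α → β}
    (h : ∀ x ∈ l, g x ∈ s) (f : α → M) :
    (l.map f).sum = ∑ b ∈ s, ((l.filter (g · = b)).map f).sum := by
  induction l with
  | nil => simp
  | cons x l ih =>
    simp only [map_cons, sum_cons, filter_cons, ih fun y hy => h y (mem_cons_of_mem x hy)]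
    rw [← if_pos (h x mem_cons_self) (t := f x) (e := 0), ← Finset.sum_ite_eq s (g x) fun _ => f x,
      ← Finset.sum_add_distrib]
    refine Finset.sum_congr rfl fun b _ => ?_
    by_cases hb : g x = b <;> simp [hb]

end List

namespace Finset

theorem sum_powerset_neg_one_pow_div_eq {α : Type*} [DecidableEq α] (D : Finset α) {x : ℝ}
    (hx : 0 < x) : ∑ K ∈ D.powerset, (-1 : ℝ) ^ K.card / (x + K.card) =
      D.card.factorial / (ascPochhammer ℝ (D.card + 1)).eval x := by
  induction D using Finset.induction_on generalizing x with
  | empty => simp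
  | insert c D hc ih =>
    have hshift : ∑ K ∈ D.powerset, (-1 : ℝ) ^ (insert c K).card / (x + (insert c K).card) =
        -∑ K ∈ D.powerset, (-1 : ℝ) ^ K.card / (x + 1 + K.card) := by
      rw [← sum_neg_distrib]
      refine sum_congr rfl fun K hK => ?_
      rw [card_insert_of_notMem fun h => hc (mem_powerset.1 hK h)]
      push_cast
      ring
    have hP := ascPochhammer_pos (D.card + 1) x hx
    have hQ := ascPochhammer_pos (D.card + 1) (x + 1) (by linarith)
    have hright := ascPochhammer_succ_eval (D.card + 1) x
    have hleft : (ascPochhammer ℝ (D.card + 1 + 1)).eval x =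
        x * (ascPochhammer ℝ (D.card + 1)).eval (x + 1) := by
      rw [ascPochhammer_succ_left]; simp
    rw [sum_powerset_insert hc, hshift, ih hx, ih (by linarith), card_insert_of_notMem hc,
      Nat.factorial_succ, ← sub_eq_add_neg, div_sub_div _ _ hP.ne' hQ.ne',
      div_eq_div_iff (by positivity) (ascPochhammer_pos _ x hx).ne']
    push_cast at hright ⊢
    linear_combination (D.card.factorial : ℝ) * (ascPochhammer ℝ (D.card + 1)).eval (x + 1) * hright
      - (D.card.factorial : ℝ) * (ascPochhammer ℝ (D.card + 1)).eval x * hleft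

theorem sum_powerset_neg_one_pow_mul_inter {α R : Type*} [DecidableEq α] [CommRing R]
    (D W : Finset α) (F : Finset α → R) :
    ∑ K ∈ D.powerset, (-1 : R) ^ K.card * F (W ∩ K) =
      if D ⊆ W then ∑ K ∈ D.powerset, (-1 : R) ^ K.card * F K else 0 := by
  split_ifs with hDW
  · exact sum_congr rfl fun K hK => by
      rw [inter_eq_right.2 ((mem_powerset.1 hK).trans hDW)]
  obtain ⟨c, hcD, hcW⟩ := not_subset.1 hDW
  rw [← insert_erase hcD, sum_powerset_insert (notMem_erase c D), ← sum_add_distrib]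
  refine sum_eq_zero fun K hK => ?_
  have hcK : c ∉ K := fun h => notMem_erase c D (mem_powerset.1 hK h)
  rw [card_insert_of_notMem hcK, inter_insert_of_notMem hcW, pow_succ]
  ring

theorem eq_zero_of_sum_superset_eq_zero {α M : Type*} [DecidableEq α] [AddCommMonoid M]
    {𝓜 : Finset (Finset α)} {c : Finset α → M}
    (h : ∀ N ∈ 𝓜, ∑ M ∈ 𝓜 with N ⊆ M, c M = 0) : ∀ N ∈ 𝓜, c N = 0 := by
  intro N hN
  refine strongDownwardInduction (p := fun N => N ∈ 𝓜 → c N = 0) (n := 𝓜.sup card)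
    (fun N ih _ hN => ?_) N (le_sup hN) hN
  have hlarger : ∀ M ∈ 𝓜.filter (N ⊆ ·), M ≠ N → c M = 0 := fun M hM hMN => by
    obtain ⟨hM, hNM⟩ := mem_filter.1 hM
    exact ih (le_sup hM) (hNM.ssubset_of_ne (Ne.symm hMN)) hM
  simpa [sum_eq_single_of_mem N (mem_filter.2 ⟨hN, subset_refl N⟩) hlarger] using h N hN

end Finset

theorem FractionRing.sum_div_ne_zero {R K ι : Type*} [CommRing R] [IsDomain R] [Field K]
    (f : R →+* K) {s : Finset ι} {c p : ι → R} (hp : ∀ i ∈ s, f (p i) ≠ 0)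
    (h : ∑ i ∈ s, f (c i) / f (p i) ≠ 0) :
    ∑ i ∈ s, algebraMap R (FractionRing R) (c i) / algebraMap R (FractionRing R) (p i) ≠ 0 := by
  classical
  set ψ := algebraMap R (FractionRing R)
  have hψ := IsFractionRing.injective R (FractionRing R)
  have hψp : ∀ i ∈ s, ψ (p i) ≠ 0 := fun i hi =>
    (map_ne_zero_iff ψ hψ).2 fun h0 => hp i hi (by rw [h0, map_zero])
  set N := ∑ i ∈ s, c i * ∏ j ∈ s.erase i, p j
  have hclear : (∑ i ∈ s, ψ (c i) / ψ (p i)) * ψ (∏ i ∈ s, p i) = ψ N := by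
    rw [Finset.sum_mul, map_sum]
    refine Finset.sum_congr rfl fun i hi => ?_
    rw [← Finset.mul_prod_erase s p hi, map_mul, map_mul, map_prod]
    field_simp [hψp i hi]
  have hfN : f N = (∏ i ∈ s, f (p i)) * ∑ i ∈ s, f (c i) / f (p i) := by
    rw [map_sum, Finset.mul_sum]
    refine Finset.sum_congr rfl fun i hi => ?_
    rw [← Finset.mul_prod_erase s _ hi, map_mul, map_prod]
    field_simp [hp i hi]
  intro h0
  rw [h0, zero_mul, eq_comm, map_eq_zero_iff ψ hψ] at hclear
  rw [hclear, map_zero, eq_comm, mul_eq_zero, Finset.prod_eq_zero_iff] at hfN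
  rcases hfN with ⟨i, hi, hi0⟩ | hsum
  exacts [hp i hi hi0, h hsum]

namespace Proc

section

variable {A : Type}

theorem sizeOf_lt_nd {l : List (A × Proc A)} {x : A × Proc A} (hx : x ∈ l) :
    sizeOf x.2 < sizeOf (nd l) := by
  have := List.sizeOf_lt_of_mem hx
  cases x
  simp only [nd.sizeOf_spec, Prod.mk.sizeOf_spec] at this ⊢
  omega

theorem sizeOf_lt_pr {l : List (ℝ × Proc A)} {x : ℝ × Proc A} (hx : x ∈ l) :
    sizeOf x.2 < sizeOf (pr l) := by
  have := List.sizeOf_lt_of_mem hx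
  cases x
  simp only [pr.sizeOf_spec, Prod.mk.sizeOf_spec] at this ⊢
  omega

@[elab_as_elim]
theorem ind {motive : Proc A → Prop}
    (nd : ∀ l : List (A × Proc A), (∀ x ∈ l, motive x.2) → motive (nd l))
    (pr : ∀ l : List (ℝ × Proc A), (∀ x ∈ l, motive x.2) → motive (pr l)) :
    ∀ s, motive s
  | .nd l => nd l fun x _ => ind nd pr x.2
  | .pr l => pr l fun x _ => ind nd pr x.2
termination_by s => sizeOf s
decreasing_by
  · exact sizeOf_lt_nd ‹_›
  · exact sizeOf_lt_pr ‹_›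

theorem WF.deadlock : WF (Proc.nd [] : Proc A) := .nd [] (by simp) (by simp)

theorem WF.pos_of_mem_pr {l : List (ℝ × Proc A)} (hl : WF (Proc.pr l)) {x : ℝ × Proc A}
    (hx : x ∈ l) : 0 < x.1 := by
  cases hl with | pr _ hl _ _ => exact (hl x hx).1

theorem WF.exists_nd_of_mem_pr {l : List (ℝ × Proc A)} (hl : WF (Proc.pr l)) {x : ℝ × Proc A}
    (hx : x ∈ l) : ∃ l', x.2 = Proc.nd l' := by
  cases hl with | pr _ hl _ _ => exact (hl x hx).2.2

theorem WF.of_mem_pr {l : List (ℝ × Proc A)} (hl : WF (Proc.pr l)) {x : ℝ × Proc A} (hx : x ∈ l) :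
    WF x.2 := by
  cases hl with | pr _ _ _ hch => exact hch x hx

theorem mem_flat {w : ℝ} {q : Proc A} {y : ℝ × Proc A} (hy : y ∈ flat w q) :
    (∃ l, q = nd l ∧ y = (w, q)) ∨ ∃ l, q = pr l ∧ ∃ z ∈ l, y = (w * z.1, z.2) := by
  cases q with
  | nd l => exact .inl ⟨l, rfl, List.mem_singleton.1 hy⟩
  | pr l => exact .inr ⟨l, rfl, List.mem_map.1 hy |>.imp fun z hz => ⟨hz.1, hz.2.symm⟩⟩

theorem flat_ne_nil {q : Proc A} (hq : WF q) (w : ℝ) : flat w q ≠ [] := by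
  cases hq with
  | nd l _ _ => simp [flat]
  | pr l _ hsum _ => rintro h; simp_all [flat]

theorem sum_fst_flat {q : Proc A} (hq : WF q) (w : ℝ) : ((flat w q).map Prod.fst).sum = w := by
  cases hq with
  | nd l _ _ => simp [flat]
  | pr l _ hsum _ =>
    simp only [flat, List.map_map, Function.comp_def, List.sum_map_mul_left]
    rw [hsum, mul_one]

theorem WF.of_mem_flat {w : ℝ} {q : Proc A} (hq : WF q) (hw : 0 < w ∧ w ≤ 1)
    {y : ℝ × Proc A} (hy : y ∈ flat w q) :
    (0 < y.1 ∧ y.1 ≤ 1 ∧ ∃ l', y.2 = Proc.nd l') ∧ WF y.2 := by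
  rcases mem_flat hy with ⟨l, rfl, rfl⟩ | ⟨l, rfl, z, hz, rfl⟩
  · exact ⟨⟨hw.1, hw.2, l, rfl⟩, hq⟩
  · cases hq with
    | pr _ hl _ hch =>
      obtain ⟨hz0, hz1, hznd⟩ := hl z hz
      exact ⟨⟨mul_pos hw.1 hz0, mul_le_one₀ hw.2 hz0.le hz1, hznd⟩, hch z hz⟩

theorem NoOmega.of_mem_flat {ω : A} {w : ℝ} {q : Proc A} (hq : NoOmega ω q)
    {y : ℝ × Proc A} (hy : y ∈ flat w q) : NoOmega ω y.2 := by
  rcases mem_flat hy with ⟨l, rfl, rfl⟩ | ⟨l, rfl, z, hz, rfl⟩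
  · exact hq
  · cases hq with
    | pr _ hch => exact hch z hz

end

section

variable {A : Type} [DecidableEq A]

local notation "φ" => algebraMap ℝ (RF A)

theorem menu_nd (l : List (A × Proc A)) : menu (nd l) = (l.map Prod.fst).toFinset := rfl

theorem exists_mem_of_step_eq_some {l : List (A × Proc A)} {a : A} {q : Proc A}
    (h : step (nd l) a = some q) : ∃ x ∈ l, x.1 = a ∧ x.2 = q := by
  obtain ⟨x, hx, rfl⟩ := Option.map_eq_some_iff.1 h
  exact ⟨x, List.mem_of_find?_eq_some hx, by simpa using List.find?_some hx, rfl⟩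

theorem exists_step_eq_some {l : List (A × Proc A)} {a : A} (h : a ∈ menu (nd l)) :
    ∃ q, step (nd l) a = some q := by
  obtain ⟨x, hx, rfl⟩ := List.mem_map.1 (List.mem_toFinset.1 h)
  obtain ⟨y, hy⟩ := Option.isSome_iff_exists.1
    (List.find?_isSome (p := fun y => decide (y.1 = x.1)).2 ⟨x, hx, by simp⟩)
  exact ⟨y.2, by simp [step, hy]⟩

theorem step_eq_none {l : List (A × Proc A)} {a : A} (h : a ∉ menu (nd l)) :
    step (nd l) a = none := by
  cases hs : step (nd l) a with
  | none => rfl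
  | some q =>
    obtain ⟨x, hx, rfl, -⟩ := exists_mem_of_step_eq_some hs
    exact absurd (List.mem_toFinset.2 (List.mem_map_of_mem hx)) h

def stepD (s : Proc A) (a : A) : Proc A := (step s a).getD (nd [])

theorem exists_mem_stepD_eq {l : List (A × Proc A)} {a : A} (h : a ∈ menu (nd l)) :
    ∃ x ∈ l, stepD (nd l) a = x.2 := by
  obtain ⟨q, hq⟩ := exists_step_eq_some h
  obtain ⟨x, hx, -, rfl⟩ := exists_mem_of_step_eq_some hq
  exact ⟨x, hx, by rw [stepD, hq, Option.getD_some]⟩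

theorem WF.step {s q : Proc A} (hs : WF s) {a : A} (h : step s a = some q) : WF q := by
  cases hs with
  | nd l _ hch =>
    obtain ⟨x, hx, -, rfl⟩ := exists_mem_of_step_eq_some h
    exact hch x hx
  | pr l _ _ _ => cases h

theorem WF.stepD {s : Proc A} (hs : WF s) (a : A) : WF (stepD s a) := by
  cases h : Proc.step s a with
  | none => simpa only [Proc.stepD, h, Option.getD_none] using WF.deadlock
  | some q => simpa only [Proc.stepD, h, Option.getD_some] using hs.step h

theorem NoOmega.step {ω : A} {s q : Proc A} (hs : NoOmega ω s) {a : A}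
    (h : step s a = some q) : NoOmega ω q := by
  cases hs with
  | nd l _ hch =>
    obtain ⟨x, hx, -, rfl⟩ := exists_mem_of_step_eq_some h
    exact hch x hx
  | pr l _ => cases h

theorem ResRel.unique {ω : A} {s T : Proc A} {r₁ r₂ : RF A} (h₁ : ResRel ω s T r₁)
    (h₂ : ResRel ω s T r₂) : r₁ = r₂ := by
  induction h₁ generalizing r₂ with
  | success _ _ h =>
    cases h₂ with
    | success => rfl
    | probL _ _ _ hT => exact absurd h hT
    | sync _ _ _ hω => exact absurd h hω
  | probL l T r hT h ih =>
    cases h₂ with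
    | success _ _ hω => exact absurd hω hT
    | probL _ _ _ _ h' =>
      exact congrArg List.sum (List.map_congr_left fun x hx => by rw [ih x hx (h' x hx)])
  | probR l l' r h ih =>
    cases h₂ with
    | probR _ _ _ h' =>
      exact congrArg List.sum (List.map_congr_left fun x hx => by rw [ih x hx (h' x hx)])
  | sync l l' r hω h ih =>
    cases h₂ with
    | success _ _ hω' => exact absurd hω' hω
    | sync _ _ _ _ h' =>
      refine Finset.sum_congr rfl fun a ha => ?_
      obtain ⟨sa, hsa⟩ := exists_step_eq_some (Finset.mem_inter.1 ha).1
      obtain ⟨Ta, hTa⟩ := exists_step_eq_some (Finset.mem_inter.1 ha).2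
      rw [ih a ha sa Ta hsa hTa (h' a ha sa Ta hsa hTa)]

theorem exists_resRel (ω : A) (s T : Proc A) : ∃ r, ResRel ω s T r := by
  induction T using Proc.ind generalizing s with
  | nd l' ihT =>
    by_cases hω : ω ∈ l'.map Prod.fst
    · exact ⟨1, .success s l' hω⟩
    induction s using Proc.ind with
    | nd l _ =>
      have hchild : ∀ a, ∃ r, ∀ sa Ta, step (nd l) a = some sa → step (nd l') a = some Ta →
          ResRel ω sa Ta r := by
        intro a
        cases hTa : step (nd l') a with
        | none => exact ⟨0, by simp⟩
        | some Ta =>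
          cases hsa : step (nd l) a with
          | none => exact ⟨0, by simp⟩
          | some sa =>
            obtain ⟨x, hx, -, rfl⟩ := exists_mem_of_step_eq_some hTa
            obtain ⟨r, hr⟩ := ihT x hx sa
            exact ⟨r, by rintro _ _ ⟨⟩ ⟨⟩; exact hr⟩
      choose r hr using hchild
      exact ⟨_, .sync l l' r hω fun a _ => hr a⟩
    | pr l ihs =>
      choose! r hr using ihs
      exact ⟨_, .probL l (nd l') r hω hr⟩
  | pr l' ihT =>
    induction s using Proc.ind with
    | nd l _ =>
      choose! r hr using fun x (hx : x ∈ l') => ihT x hx (nd l)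
      exact ⟨_, .probR l l' r hr⟩
    | pr l ihs =>
      choose! r hr using ihs
      exact ⟨_, .probL l (pr l') r id hr⟩

noncomputable def res (ω : A) (s T : Proc A) : RF A := (exists_resRel ω s T).choose

theorem resRel_res (ω : A) (s T : Proc A) : ResRel ω s T (res ω s T) :=
  (exists_resRel ω s T).choose_spec

theorem ResRel.res_eq {ω : A} {s T : Proc A} {r : RF A} (h : ResRel ω s T r) : res ω s T = r :=
  (resRel_res ω s T).unique h

theorem testEquiv_iff_res_eq {ω : A} {s t : Proc A} :
    TestEquiv ω s t ↔ ∀ T, WF T → res ω s T = res ω t T := by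
  have hiff : ∀ {s T : Proc A} {r : RF A}, ResRel ω s T r ↔ res ω s T = r :=
    ⟨ResRel.res_eq, fun h => h ▸ resRel_res ω _ _⟩
  simp only [TestEquiv, hiff]
  exact ⟨fun h T hT => ((h T hT _).1 rfl).symm, fun h T hT r => by rw [h T hT]⟩

/-- The factor `a / ∑_{b ∈ I} b` of the synchronisation rule `ResRel.sync`. -/
noncomputable def choiceWeight (I : Finset A) (a : A) : RF A := RVar a / ∑ b ∈ I, RVar b

theorem res_of_omega_mem {ω : A} {l' : List (A × Proc A)} (s : Proc A)
    (hω : ω ∈ l'.map Prod.fst) : res ω s (nd l') = 1 :=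
  (ResRel.success s l' hω).res_eq

theorem res_pr_left {ω : A} {T : Proc A} (l : List (ℝ × Proc A)) (hT : ¬ hasOmega ω T) :
    res ω (pr l) T = (l.map fun x => φ x.1 * res ω x.2 T).sum :=
  (ResRel.probL l T _ hT fun x _ => resRel_res ω x.2 T).res_eq

theorem res_nd_pr {ω : A} (l : List (A × Proc A)) (l' : List (ℝ × Proc A)) :
    res ω (nd l) (pr l') = (l'.map fun y => φ y.1 * res ω (nd l) y.2).sum :=
  (ResRel.probR l l' _ fun y _ => resRel_res ω (nd l) y.2).res_eq

theorem res_nd_nd {ω : A} (l l' : List (A × Proc A)) (hω : ω ∉ l'.map Prod.fst) :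
    res ω (nd l) (nd l') = ∑ a ∈ menu (nd l) ∩ menu (nd l'),
      choiceWeight (menu (nd l) ∩ menu (nd l')) a * res ω (stepD (nd l) a) (stepD (nd l') a) :=
  (ResRel.sync l l' _ hω fun a _ sa Ta hsa hTa => by
    simpa only [stepD, hsa, hTa, Option.getD_some] using resRel_res ω sa Ta).res_eq

theorem res_deadlock (ω : A) (s : Proc A) : res ω s (nd []) = 0 := by
  induction s using Proc.ind with
  | nd l _ => simp [res_nd_nd l [] (by simp), menu_nd]
  | pr l ih =>
    rw [res_pr_left l (by simp [hasOmega]),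
      List.map_congr_left fun x hx => by rw [ih x hx, mul_zero]]
    simp

theorem res_pr_of_wf {ω : A} {l : List (ℝ × Proc A)} (hl : WF (pr l)) (T : Proc A) :
    res ω (pr l) T = (l.map fun x => φ x.1 * res ω x.2 T).sum := by
  by_cases hT : hasOmega ω T
  · obtain ⟨l', rfl⟩ : ∃ l', T = nd l' := by cases T <;> simp_all [hasOmega]
    cases hl with
    | pr _ _ hsum _ =>
      simp only [res_of_omega_mem _ hT, mul_one]
      simpa [map_list_sum, Function.comp_def] using (congrArg φ hsum).symm
  · exact res_pr_left l hT

theorem res_pr_right_of_wf {ω : A} {s : Proc A} (hs : WF s) (l' : List (ℝ × Proc A)) :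
    res ω s (pr l') = (l'.map fun y => φ y.1 * res ω s y.2).sum := by
  cases s with
  | nd l => exact res_nd_pr l l'
  | pr l =>
    have hnd : ∀ x ∈ l, res ω x.2 (pr l') = (l'.map fun y => φ y.1 * res ω x.2 y.2).sum := by
      intro x hx
      obtain ⟨lx, hlx⟩ := hs.exists_nd_of_mem_pr hx
      rw [hlx, res_nd_pr]
    rw [res_pr_left l (by simp [hasOmega]), List.map_congr_left fun x hx => by
      rw [hnd x hx, ← List.sum_map_mul_left], List.sum_map_sum_map_comm]
    refine congrArg List.sum (List.map_congr_left fun y _ => ?_)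
    rw [res_pr_of_wf hs, ← List.sum_map_mul_left]
    exact congrArg List.sum (List.map_congr_left fun x _ => by ring)

theorem res_flat {ω : A} {q : Proc A} (hq : WF q) (w : ℝ) (T : Proc A) :
    ((flat w q).map fun y => φ y.1 * res ω y.2 T).sum = φ w * res ω q T := by
  cases q with
  | nd l => simp [flat]
  | pr l =>
    rw [flat, List.map_map, res_pr_of_wf hq, ← List.sum_map_mul_left]
    exact congrArg List.sum (List.map_congr_left fun z _ => by simp [mul_assoc])

/-- Probabilistic branches are unfolded one level only, which suffices for well-formed
processes. -/
def menus : Proc A → Finset (Finset A)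
  | nd l => {menu (nd l)}
  | pr l => (l.map fun x => menu x.2).toFinset

def branches (l : List (ℝ × Proc A)) (M : Finset A) : List (ℝ × Proc A) :=
  l.filter fun x => x.2.menu = M

theorem mem_branches {l : List (ℝ × Proc A)} {M : Finset A} {x : ℝ × Proc A} :
    x ∈ branches l M ↔ x ∈ l ∧ menu x.2 = M := by
  simp [branches]

theorem P1_nd (l : List (A × Proc A)) (M : Finset A) :
    P1 (nd l) M = if menu (nd l) = M then 1 else 0 := by
  rw [P1]; rfl

theorem P1_pr (l : List (ℝ × Proc A)) (M : Finset A) :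
    P1 (pr l) M = (l.map fun x => x.1 * P1 x.2 M).sum := by
  rw [P1]
  exact congrArg List.sum (List.attach_map_val (f := fun x : ℝ × Proc A => x.1 * P1 x.2 M))

theorem P1_pr_of_wf {l : List (ℝ × Proc A)} (hl : WF (pr l)) (M : Finset A) :
    P1 (pr l) M = ((branches l M).map Prod.fst).sum := by
  have hbranch : ∀ x ∈ l, x.1 * P1 x.2 M = if x.2.menu = M then x.1 else 0 := by
    intro x hx
    obtain ⟨lx, hlx⟩ := hl.exists_nd_of_mem_pr hx
    rw [hlx, P1_nd]
    split_ifs <;> simp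
  rw [P1_pr, List.map_congr_left hbranch, List.sum_map_ite, branches]
  simp

theorem P1_pr_pos {l : List (ℝ × Proc A)} (hl : WF (pr l)) {M : Finset A}
    (hM : branches l M ≠ []) : 0 < P1 (pr l) M := by
  rw [P1_pr_of_wf hl]
  refine List.sum_pos _ (fun w hw => ?_) (by simpa using hM)
  obtain ⟨x, hx, rfl⟩ := List.mem_map.1 hw
  exact hl.pos_of_mem_pr (mem_branches.1 hx).1

theorem P1_nonneg {s : Proc A} (hs : WF s) (M : Finset A) : 0 ≤ P1 s M := by
  cases s with
  | nd l => rw [P1_nd]; split_ifs <;> norm_num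
  | pr l =>
    rcases eq_or_ne (branches l M) [] with hM | hM
    · simp [P1_pr_of_wf hs, hM]
    · exact (P1_pr_pos hs hM).le

theorem P1_eq_zero_of_notMem_menus {s : Proc A} (hs : WF s) {M : Finset A}
    (hM : M ∉ menus s) : P1 s M = 0 := by
  cases s with
  | nd l => rw [P1_nd, if_neg fun h => hM (by simp [menus, h])]
  | pr l =>
    rw [P1_pr_of_wf hs, branches, List.filter_eq_nil_iff.2]
    · rfl
    · exact fun x hx h => hM (by simpa [menus] using ⟨x.1, x.2, hx, by simpa using h⟩)

theorem sum_P1_eq_one {s : Proc A} (hs : WF s) {𝓜 : Finset (Finset A)} (h𝓜 : menus s ⊆ 𝓜) :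
    ∑ M ∈ 𝓜, P1 s M = 1 := by
  cases hs with
  | nd l _ _ =>
    simp only [P1_nd]
    rw [Finset.sum_ite_eq, if_pos (h𝓜 (by simp [menus]))]
  | pr l hl hsum hch =>
    simp only [P1_pr_of_wf (.pr l hl hsum hch), branches]
    rw [← List.sum_map_eq_sum_fiberwise fun x hx => h𝓜 (by simpa [menus] using ⟨_, _, hx, rfl⟩),
      hsum]

theorem NoOmega.notMem_menu {ω : A} {s : Proc A} (hs : NoOmega ω s) : ω ∉ menu s := by
  cases hs with
  | nd l hω _ => simpa [menu_nd] using hω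
  | pr l _ => simp [menu]

theorem NoOmega.notMem_of_mem_menus {ω : A} {s : Proc A} (hs : NoOmega ω s) {M : Finset A}
    (hM : M ∈ menus s) : ω ∉ M := by
  cases s with
  | nd l =>
    rw [menus, Finset.mem_singleton] at hM
    exact hM ▸ hs.notMem_menu
  | pr l =>
    obtain ⟨x, hx, rfl⟩ := List.mem_map.1 (List.mem_toFinset.1 hM)
    cases hs with | pr _ hch => exact (hch x hx).notMem_menu

/-- The list `entries` in the definition of `after (pr l) M a`. -/
noncomputable def afterBranches (l : List (ℝ × Proc A)) (M : Finset A) (a : A) :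
    List (ℝ × Proc A) :=
  (branches l M).flatMap fun x =>
    match x.2.step a with
    | none => []
    | some q => flat (x.1 / ((branches l M).map Prod.fst).sum) q

noncomputable def afterD (s : Proc A) (M : Finset A) (a : A) : Proc A :=
  (after s M a).getD (nd [])

theorem after_nd (l : List (A × Proc A)) (M : Finset A) (a : A) :
    after (nd l) M a = if menu (nd l) = M then step (nd l) a else none := rfl

theorem after_pr (l : List (ℝ × Proc A)) (M : Finset A) (a : A) :
    after (pr l) M a =
      if (afterBranches l M a).isEmpty then none else some (pr (afterBranches l M a)) := rfl

theorem afterD_nd_menu (l : List (A × Proc A)) (a : A) :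
    afterD (nd l) (menu (nd l)) a = stepD (nd l) a := by
  simp [afterD, after_nd, stepD]

theorem exists_step_of_mem_branches {l : List (ℝ × Proc A)} (hl : WF (pr l)) {M : Finset A}
    {a : A} (ha : a ∈ M) {x : ℝ × Proc A} (hx : x ∈ branches l M) :
    ∃ q, step x.2 a = some q := by
  obtain ⟨hxl, rfl⟩ := mem_branches.1 hx
  obtain ⟨lx, hlx⟩ := hl.exists_nd_of_mem_pr hxl
  rw [hlx] at ha ⊢
  exact exists_step_eq_some ha

theorem mem_afterBranches {l : List (ℝ × Proc A)} {M : Finset A} {a : A} {y : ℝ × Proc A}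
    (hy : y ∈ afterBranches l M a) : ∃ x ∈ branches l M, ∃ q, step x.2 a = some q ∧
      y ∈ flat (x.1 / ((branches l M).map Prod.fst).sum) q := by
  obtain ⟨x, hx, hyx⟩ := List.mem_flatMap.1 hy
  refine ⟨x, hx, ?_⟩
  cases hq : step x.2 a with
  | none => simp [hq] at hyx
  | some q => exact ⟨q, rfl, by simpa [hq] using hyx⟩

theorem sum_map_afterBranches {R : Type*} [AddCommMonoid R] {l : List (ℝ × Proc A)}
    (hl : WF (pr l)) {M : Finset A} {a : A} (ha : a ∈ M) (g : ℝ × Proc A → R) :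
    ((afterBranches l M a).map g).sum =
      ((branches l M).map fun x => ((flat (x.1 / P1 (pr l) M) (stepD x.2 a)).map g).sum).sum := by
  simp only [afterBranches, List.flatMap, List.map_flatten, List.sum_flatten, List.map_map,
    Function.comp_def, P1_pr_of_wf hl]
  refine congrArg List.sum (List.map_congr_left fun x hx => ?_)
  obtain ⟨q, hq⟩ := exists_step_of_mem_branches hl ha hx
  simp only [hq, stepD, Option.getD_some]

theorem after_eq_none_of_notMem {s : Proc A} {M : Finset A} {a : A} (ha : a ∉ M) :
    after s M a = none := by
  cases s with
  | nd l =>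
    rw [after_nd]
    split_ifs with h
    exacts [step_eq_none (h ▸ ha), rfl]
  | pr l =>
    have hnil : afterBranches l M a = [] := List.flatMap_eq_nil_iff.2 fun x hx => by
      obtain ⟨-, rfl⟩ := mem_branches.1 hx
      cases hx2 : x.2 with
      | nd lx => rw [step_eq_none (hx2 ▸ ha)]
      | pr lx => rfl
    rw [after_pr, hnil]
    rfl

theorem exists_after_eq_some {s : Proc A} (hs : WF s) {M : Finset A} {a : A}
    (hpos : 0 < P1 s M) (ha : a ∈ M) : ∃ s', after s M a = some s' := by
  cases s with
  | nd l =>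
    rw [P1_nd] at hpos
    split_ifs at hpos with hM
    · obtain ⟨q, hq⟩ := exists_step_eq_some (hM ▸ ha)
      exact ⟨q, by rw [after_nd, if_pos hM, hq]⟩
    · exact absurd hpos (lt_irrefl 0)
  | pr l =>
    obtain ⟨x, hx⟩ : ∃ x, x ∈ branches l M := by
      rw [P1_pr_of_wf hs] at hpos
      exact List.exists_mem_of_ne_nil _ fun h => by simp [h] at hpos
    obtain ⟨q, hq⟩ := exists_step_of_mem_branches hs ha hx
    obtain ⟨y, hy⟩ := List.exists_mem_of_ne_nil _
      (flat_ne_nil ((hs.of_mem_pr (mem_branches.1 hx).1).step hq) _)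
    have hne : afterBranches l M a ≠ [] :=
      List.ne_nil_of_mem (List.mem_flatMap.2 ⟨x, hx, by rw [hq]; exact hy⟩)
    exact ⟨_, by rw [after_pr, if_neg (by simpa using hne)]⟩

theorem eq_pr_afterBranches_of_after_eq_some {l : List (ℝ × Proc A)} {M : Finset A} {a : A}
    {s' : Proc A} (h : after (pr l) M a = some s') : s' = pr (afterBranches l M a) := by
  rw [after_pr] at h
  split_ifs at h
  exact (Option.some.inj h).symm

theorem WF.of_mem_afterBranches {l : List (ℝ × Proc A)} (hl : WF (Proc.pr l)) {M : Finset A}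
    {a : A} {y : ℝ × Proc A} (hy : y ∈ afterBranches l M a) :
    (0 < y.1 ∧ y.1 ≤ 1 ∧ ∃ l', y.2 = Proc.nd l') ∧ WF y.2 := by
  obtain ⟨x, hx, q, hq, hy⟩ := mem_afterBranches hy
  rw [← P1_pr_of_wf hl] at hy
  have hx0 := hl.pos_of_mem_pr (mem_branches.1 hx).1
  have hxP : x.1 ≤ P1 (Proc.pr l) M := by
    rw [P1_pr_of_wf hl]
    refine List.single_le_sum (fun w hw => ?_) _ (List.mem_map_of_mem hx)
    obtain ⟨z, hz, rfl⟩ := List.mem_map.1 hw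
    exact (hl.pos_of_mem_pr (mem_branches.1 hz).1).le
  have hP := hx0.trans_le hxP
  exact ((hl.of_mem_pr (mem_branches.1 hx).1).step hq).of_mem_flat
    ⟨div_pos hx0 hP, (div_le_one hP).2 hxP⟩ hy

theorem sum_fst_afterBranches {l : List (ℝ × Proc A)} (hl : WF (pr l)) {M : Finset A} {a : A}
    (ha : a ∈ M) (hM : branches l M ≠ []) : ((afterBranches l M a).map Prod.fst).sum = 1 := by
  rw [sum_map_afterBranches hl ha, List.map_congr_left fun x hx =>
    sum_fst_flat ((hl.of_mem_pr (mem_branches.1 hx).1).stepD a) _]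
  simp only [div_eq_mul_inv]
  rw [List.sum_map_mul_right, ← P1_pr_of_wf hl, mul_inv_cancel₀ (P1_pr_pos hl hM).ne']

theorem WF.after {s s' : Proc A} (hs : WF s) {M : Finset A} {a : A}
    (h : after s M a = some s') : WF s' := by
  cases s with
  | nd l =>
    rw [after_nd] at h
    split_ifs at h
    exact hs.step h
  | pr l =>
    obtain rfl := eq_pr_afterBranches_of_after_eq_some h
    have ha : a ∈ M := by_contra fun ha => by simp [after_eq_none_of_notMem ha] at h
    have hM : branches l M ≠ [] := fun hM => by simp [after_pr, afterBranches, hM] at h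
    exact .pr _ (fun y hy => (hs.of_mem_afterBranches hy).1) (sum_fst_afterBranches hs ha hM)
      (fun y hy => (hs.of_mem_afterBranches hy).2)

theorem WF.afterD {s : Proc A} (hs : WF s) (M : Finset A) (a : A) : WF (afterD s M a) := by
  cases h : Proc.after s M a with
  | none => simpa only [Proc.afterD, h, Option.getD_none] using WF.deadlock
  | some s' => simpa only [Proc.afterD, h, Option.getD_some] using hs.after h

theorem NoOmega.after {ω : A} {s s' : Proc A} (hs : NoOmega ω s) {M : Finset A} {a : A}
    (h : after s M a = some s') : NoOmega ω s' := by
  cases s with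
  | nd l =>
    rw [after_nd] at h
    split_ifs at h
    exact hs.step h
  | pr l =>
    obtain rfl := eq_pr_afterBranches_of_after_eq_some h
    refine .pr _ fun y hy => ?_
    obtain ⟨x, hx, q, hq, hy⟩ := mem_afterBranches hy
    cases hs with | pr _ hch => exact ((hch x (mem_branches.1 hx).1).step hq).of_mem_flat hy

theorem NoOmega.afterD {ω : A} {s : Proc A} (hs : NoOmega ω s) (M : Finset A) (a : A) :
    NoOmega ω (afterD s M a) := by
  cases h : Proc.after s M a with
  | none =>
    simpa only [Proc.afterD, h, Option.getD_none] using NoOmega.nd [] (by simp) (by simp)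
  | some s' => simpa only [Proc.afterD, h, Option.getD_some] using hs.after h

theorem res_afterD_pr {ω : A} {l : List (ℝ × Proc A)} (hl : WF (pr l)) {M : Finset A} {a : A}
    (ha : a ∈ M) (T : Proc A) :
    φ (P1 (pr l) M) * res ω (afterD (pr l) M a) T =
      ((branches l M).map fun x => φ x.1 * res ω (stepD x.2 a) T).sum := by
  rcases eq_or_ne (branches l M) [] with hM | hM
  · simp [P1_pr_of_wf hl, hM]
  have hpos := P1_pr_pos hl hM
  obtain ⟨s', hs'⟩ := exists_after_eq_some hl hpos ha
  have hwf := hl.after hs'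
  obtain rfl := eq_pr_afterBranches_of_after_eq_some hs'
  rw [afterD, hs', Option.getD_some, res_pr_of_wf hwf, sum_map_afterBranches hl ha,
    ← List.sum_map_mul_left]
  refine congrArg List.sum (List.map_congr_left fun x hx => ?_)
  rw [res_flat ((hl.of_mem_pr (mem_branches.1 hx).1).stepD a), ← mul_assoc, ← map_mul,
    mul_div_cancel₀ _ hpos.ne']

theorem Pn_cons {s : Proc A} (hs : WF s) (M : Finset A) (a : A) (tr : List (Finset A × A))
    (N : Finset A) :
    Pn s ((M, a) :: tr) N = if 0 < P1 s M ∧ a ∈ M then Pn (afterD s M a) tr N else none := by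
  rw [Pn]
  by_cases hpos : 0 < P1 s M
  · by_cases ha : a ∈ M
    · obtain ⟨s', hs'⟩ := exists_after_eq_some hs hpos ha
      simp [hpos, ha, hs', afterD]
    · simp [hpos, ha, after_eq_none_of_notMem ha]
  · simp [hpos]

theorem res_nd_eq_sum_menus {ω : A} {s : Proc A} (hs : WF s) {l' : List (A × Proc A)}
    (hω : ω ∉ l'.map Prod.fst) {𝓜 : Finset (Finset A)} (h𝓜 : menus s ⊆ 𝓜) :
    res ω s (nd l') = ∑ M ∈ 𝓜, φ (P1 s M) * ∑ a ∈ M ∩ menu (nd l'),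
      choiceWeight (M ∩ menu (nd l')) a * res ω (afterD s M a) (stepD (nd l') a) := by
  cases s with
  | nd l =>
    simp only [P1_nd, apply_ite φ, map_one, map_zero, ite_mul, one_mul, zero_mul]
    rw [Finset.sum_ite_eq, if_pos (h𝓜 (by simp [menus])), res_nd_nd l l' hω]
    simp only [afterD_nd_menu]
  | pr l =>
    rw [res_pr_of_wf hs, List.sum_map_eq_sum_fiberwise (g := fun x => menu x.2)
      (fun x hx => h𝓜 (by simpa [menus] using ⟨_, _, hx, rfl⟩))]
    refine Finset.sum_congr rfl fun M _ => ?_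
    have hbranch : ∀ x ∈ branches l M, φ x.1 * res ω x.2 (nd l') = ∑ a ∈ M ∩ menu (nd l'),
        choiceWeight (M ∩ menu (nd l')) a * (φ x.1 * res ω (stepD x.2 a) (stepD (nd l') a)) := by
      intro x hx
      obtain ⟨hxl, rfl⟩ := mem_branches.1 hx
      obtain ⟨lx, hlx⟩ := hs.exists_nd_of_mem_pr hxl
      rw [hlx, res_nd_nd lx l' hω, Finset.mul_sum]
      exact Finset.sum_congr rfl fun a _ => by ring
    rw [← branches, List.map_congr_left hbranch, List.sum_map_finset_sum_comm, Finset.mul_sum]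
    refine Finset.sum_congr rfl fun a ha => ?_
    rw [List.sum_map_mul_left, ← res_afterD_pr hs (Finset.mem_inter.1 ha).1]
    ring

theorem RTEquiv.P1_eq {s t : Proc A} (h : RTEquiv s t) (M : Finset A) : P1 s M = P1 t M :=
  Option.some.inj (by simpa [Pn] using h [] M)

theorem RTEquiv.afterD {s t : Proc A} (hs : WF s) (ht : WF t) (h : RTEquiv s t) {M : Finset A}
    {a : A} (hpos : 0 < P1 s M) (ha : a ∈ M) : RTEquiv (afterD s M a) (afterD t M a) :=
  fun tr N => by
    simpa [Pn_cons hs, Pn_cons ht, hpos, ha, ← h.P1_eq M] using h ((M, a) :: tr) N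

theorem RTEquiv.res_eq {ω : A} {s t T : Proc A} (hs : WF s) (ht : WF t) (hT : WF T)
    (h : RTEquiv s t) : res ω s T = res ω t T := by
  induction hT generalizing s t with
  | nd l' _ _ ih =>
    by_cases hω : ω ∈ l'.map Prod.fst
    · rw [res_of_omega_mem s hω, res_of_omega_mem t hω]
    rw [res_nd_eq_sum_menus hs hω Finset.subset_union_left,
      res_nd_eq_sum_menus ht hω Finset.subset_union_right]
    refine Finset.sum_congr rfl fun M _ => ?_
    rw [h.P1_eq M]
    rcases (P1_nonneg ht M).eq_or_lt with h0 | hpos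
    · rw [← h0, map_zero, zero_mul, zero_mul]
    refine congrArg _ (Finset.sum_congr rfl fun a ha => congrArg _ ?_)
    obtain ⟨haM, haT⟩ := Finset.mem_inter.1 ha
    obtain ⟨x, hx, hxa⟩ := exists_mem_stepD_eq haT
    rw [hxa]
    exact ih x hx (hs.afterD M a) (ht.afterD M a) (h.afterD hs ht (h.P1_eq M ▸ hpos) haM)
  | pr l'' _ _ _ ih =>
    rw [res_pr_right_of_wf hs, res_pr_right_of_wf ht]
    exact congrArg List.sum (List.map_congr_left fun y hy => by rw [ih y hy hs ht h])

theorem sum_powerset_choiceWeight_ne_zero {a : A} {D : Finset A} (haD : a ∉ D) :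
    ∑ K ∈ D.powerset, (-1 : RF A) ^ K.card * choiceWeight (insert a K) a ≠ 0 := by
  have hterm : ∀ K ∈ D.powerset, (-1 : RF A) ^ K.card * choiceWeight (insert a K) a =
      algebraMap (MvPolynomial A ℝ) (RF A) ((-1) ^ K.card * MvPolynomial.X a) /
        algebraMap (MvPolynomial A ℝ) (RF A) (∑ b ∈ insert a K, MvPolynomial.X b) := by
    intro K _
    simp only [choiceWeight, RVar, map_mul, map_pow, map_neg, map_one, map_sum, mul_div_assoc]
  have hcard : ∀ K ∈ D.powerset, (insert a K).card = K.card + 1 := fun K hK =>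
    Finset.card_insert_of_notMem fun h => haD (Finset.mem_powerset.1 hK h)
  rw [Finset.sum_congr rfl hterm]
  refine FractionRing.sum_div_ne_zero (MvPolynomial.eval fun _ => (1 : ℝ))
    (fun K hK => by simp [hcard K hK, Nat.cast_add_one_ne_zero]) ?_
  rw [Finset.sum_congr rfl (g := fun K => (-1 : ℝ) ^ K.card / (1 + K.card)) fun K hK => by
      simp [hcard K hK, add_comm], Finset.sum_powerset_neg_one_pow_div_eq D one_pos]
  exact (div_pos (by positivity) (ascPochhammer_pos _ _ one_pos)).ne'

theorem eq_zero_of_sum_mul_choiceWeight_eq_zero {a : A} {V : Finset A} (haV : a ∉ V)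
    {𝓜 : Finset (Finset A)} (h𝓜 : ∀ M ∈ 𝓜, a ∈ M ∧ M.erase a ⊆ V) {c : Finset A → RF A}
    (h : ∀ K ⊆ V, ∑ M ∈ 𝓜, c M * choiceWeight (M ∩ insert a K) a = 0) :
    ∀ M ∈ 𝓜, c M = 0 := by
  have hsuperset : ∀ D ⊆ V, ∑ M ∈ 𝓜 with D ⊆ M, c M = 0 := by
    intro D hD
    have hg := sum_powerset_choiceWeight_ne_zero fun h => haV (hD h)
    refine (mul_eq_zero.1 ?_).resolve_right hg
    calc (∑ M ∈ 𝓜 with D ⊆ M, c M) *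
          ∑ K ∈ D.powerset, (-1 : RF A) ^ K.card * choiceWeight (insert a K) a
        = ∑ M ∈ 𝓜, c M * ∑ K ∈ D.powerset,
            (-1 : RF A) ^ K.card * choiceWeight (insert a (M ∩ K)) a := by
          rw [Finset.sum_filter, Finset.sum_mul]
          refine Finset.sum_congr rfl fun M _ => ?_
          rw [Finset.sum_powerset_neg_one_pow_mul_inter D M fun J => choiceWeight (insert a J) a]
          split_ifs <;> simp
      _ = ∑ K ∈ D.powerset, (-1 : RF A) ^ K.card *
            ∑ M ∈ 𝓜, c M * choiceWeight (M ∩ insert a K) a := by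
          simp only [Finset.mul_sum]
          rw [Finset.sum_comm]
          refine Finset.sum_congr rfl fun K _ => Finset.sum_congr rfl fun M hM => ?_
          rw [Finset.inter_insert_of_mem (h𝓜 M hM).1]
          ring
      _ = 0 := Finset.sum_eq_zero fun K hK => by
          rw [h K ((Finset.mem_powerset.1 hK).trans hD), mul_zero]
  refine Finset.eq_zero_of_sum_superset_eq_zero fun N hN => ?_
  rw [← hsuperset (N.erase a) (h𝓜 N hN).2]
  exact Finset.sum_congr (Finset.filter_congr fun M hM =>
    (Finset.erase_subset_iff_of_mem (h𝓜 M hM).1).symm) fun _ _ => rfl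

end

section

variable {A : Type}

/-- The test `a.T' + ∑_{b ∈ K} b.0`. -/
noncomputable def probe (K : Finset A) (a : A) (T' : Proc A) : Proc A :=
  nd ((a, T') :: K.toList.map fun b => (b, nd []))

theorem WF.probe {K : Finset A} {a : A} {T' : Proc A} (haK : a ∉ K) (hT' : WF T') :
    WF (probe K a T') := by
  refine .nd _ ?_ fun x hx => ?_
  · simpa [Function.comp_def, haK] using K.nodup_toList
  · rcases List.mem_cons.1 hx with rfl | hx
    · exact hT'
    · obtain ⟨b, -, rfl⟩ := List.mem_map.1 hx
      exact WF.deadlock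

end

section

variable {A : Type} [DecidableEq A]

local notation "φ" => algebraMap ℝ (RF A)

theorem menu_probe (K : Finset A) (a : A) (T' : Proc A) : menu (probe K a T') = insert a K := by
  ext b
  simp [probe, menu_nd, Function.comp_def]

theorem stepD_probe_self (K : Finset A) (a : A) (T' : Proc A) : stepD (probe K a T') a = T' := by
  simp [probe, stepD, step]

theorem stepD_probe_of_ne (K : Finset A) {a b : A} (T' : Proc A) (hb : b ≠ a) :
    stepD (probe K a T') b = nd [] := by
  cases h : step (probe K a T') b with
  | none => simp [stepD, h]
  | some q =>
    obtain ⟨x, hx, hxb, rfl⟩ := exists_mem_of_step_eq_some h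
    rcases List.mem_cons.1 hx with rfl | hx
    · exact absurd hxb.symm hb
    · obtain ⟨c, -, rfl⟩ := List.mem_map.1 hx
      simp [stepD, h]

theorem res_probe {ω : A} {s : Proc A} (hs : WF s) {K : Finset A} {a : A} (T' : Proc A)
    (hω : ω ∉ insert a K) {𝓜 : Finset (Finset A)} (h𝓜 : menus s ⊆ 𝓜) :
    res ω s (probe K a T') = ∑ M ∈ 𝓜, φ (P1 s M) *
      if a ∈ M then choiceWeight (M ∩ insert a K) a * res ω (afterD s M a) T' else 0 := by
  rw [probe, res_nd_eq_sum_menus hs (by simpa [menu_nd] using hω) h𝓜]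
  refine Finset.sum_congr rfl fun M _ => congrArg _ ?_
  rw [← probe, menu_probe]
  have hother : ∀ b ∈ M ∩ insert a K, b ≠ a →
      choiceWeight (M ∩ insert a K) b * res ω (afterD s M b) (stepD (probe K a T') b) = 0 :=
    fun b _ hb => by rw [stepD_probe_of_ne K T' hb, res_deadlock, mul_zero]
  split_ifs with ha
  · rw [Finset.sum_eq_single_of_mem a (by simp [ha]) hother, stepD_probe_self]
  · exact Finset.sum_eq_zero fun b hb => hother b hb fun h => ha (h ▸ (Finset.mem_inter.1 hb).1)

section TestEquivalent

variable {ω : A} {s t : Proc A} (hs : WF s) (ht : WF t) (hsω : NoOmega ω s) (htω : NoOmega ω t)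
  (hres : ∀ T, WF T → res ω s T = res ω t T)
include hs ht hsω htω hres

theorem P1_mul_res_afterD_eq_of_res_eq {a : A} {M : Finset A} (hM : M ∈ menus s ∪ menus t)
    (ha : a ∈ M) {T' : Proc A} (hT' : WF T') :
    φ (P1 s M) * res ω (afterD s M a) T' = φ (P1 t M) * res ω (afterD t M a) T' := by
  have hωM : ∀ M ∈ menus s ∪ menus t, ω ∉ M := fun M hM => by
    rcases Finset.mem_union.1 hM with hM | hM
    exacts [hsω.notMem_of_mem_menus hM, htω.notMem_of_mem_menus hM]
  set V := ((menus s ∪ menus t).biUnion id).erase a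
  have hprobe : ∀ K ⊆ V, ∑ M ∈ (menus s ∪ menus t).filter (a ∈ ·),
      (φ (P1 s M) * res ω (afterD s M a) T' - φ (P1 t M) * res ω (afterD t M a) T') *
        choiceWeight (M ∩ insert a K) a = 0 := by
    intro K hK
    have hω : ω ∉ insert a K := by
      rw [Finset.mem_insert, not_or]
      refine ⟨fun h => hωM M hM (h ▸ ha), fun h => ?_⟩
      obtain ⟨N, hN, hωN⟩ := Finset.mem_biUnion.1 (Finset.mem_of_mem_erase (hK h))
      exact hωM N hN hωN
    have := hres _ ((WF.probe (Finset.notMem_erase a _ <| hK ·)) hT')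
    rw [res_probe hs T' hω Finset.subset_union_left, res_probe ht T' hω Finset.subset_union_right,
      ← sub_eq_zero, ← Finset.sum_sub_distrib] at this
    rw [Finset.sum_filter]
    refine (Finset.sum_congr rfl fun M _ => ?_).trans this
    split_ifs <;> ring
  refine sub_eq_zero.1 (eq_zero_of_sum_mul_choiceWeight_eq_zero (Finset.notMem_erase a _)
    (fun N hN => ?_) hprobe M (Finset.mem_filter.2 ⟨hM, ha⟩))
  obtain ⟨hN, haN⟩ := Finset.mem_filter.1 hN
  exact ⟨haN, Finset.erase_subset_erase a (Finset.subset_biUnion_of_mem id hN)⟩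

theorem P1_eq_of_res_eq (M : Finset A) : P1 s M = P1 t M := by
  have hsuccess : WF (nd [(ω, nd [])] : Proc A) := .nd _ (by simp) (by simpa using WF.deadlock)
  have hne : ∀ M ≠ ∅, P1 s M = P1 t M := by
    intro M hM
    by_cases hM𝓜 : M ∈ menus s ∪ menus t
    · obtain ⟨a, ha⟩ := Finset.nonempty_iff_ne_empty.2 hM
      simpa [res_of_omega_mem] using
        P1_mul_res_afterD_eq_of_res_eq hs ht hsω htω hres hM𝓜 ha hsuccess
    · rw [Finset.mem_union, not_or] at hM𝓜
      rw [P1_eq_zero_of_notMem_menus hs hM𝓜.1, P1_eq_zero_of_notMem_menus ht hM𝓜.2]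
  -- No probe can observe the empty menu: its probability is what the other menus leave.
  rcases eq_or_ne M ∅ with rfl | hM
  · set 𝓜 := insert ∅ (menus s ∪ menus t)
    have hs1 : ∑ M ∈ 𝓜, P1 s M = 1 :=
      sum_P1_eq_one hs (Finset.subset_union_left.trans (Finset.subset_insert ∅ _))
    have ht1 : ∑ M ∈ 𝓜, P1 t M = 1 :=
      sum_P1_eq_one ht (Finset.subset_union_right.trans (Finset.subset_insert ∅ _))
    have h𝓜 : ∅ ∈ 𝓜 := Finset.mem_insert_self _ _
    rw [← Finset.add_sum_erase _ _ h𝓜] at hs1 ht1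
    rw [Finset.sum_congr rfl fun N hN => hne N (Finset.ne_of_mem_erase hN)] at hs1
    linarith
  · exact hne M hM

theorem res_afterD_eq_of_res_eq {M : Finset A} {a : A} (hpos : 0 < P1 s M) (ha : a ∈ M)
    {T' : Proc A} (hT' : WF T') : res ω (afterD s M a) T' = res ω (afterD t M a) T' := by
  have hM : M ∈ menus s ∪ menus t := Finset.mem_union_left _
    (by_contra fun hM => hpos.ne' (P1_eq_zero_of_notMem_menus hs hM))
  have := P1_mul_res_afterD_eq_of_res_eq hs ht hsω htω hres hM ha hT'
  rw [← P1_eq_of_res_eq hs ht hsω htω hres M] at this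
  exact mul_left_cancel₀ (by simpa using hpos.ne') this

end TestEquivalent

theorem rtEquiv_of_res_eq {ω : A} {s t : Proc A} (hs : WF s) (ht : WF t) (hsω : NoOmega ω s)
    (htω : NoOmega ω t) (hres : ∀ T, WF T → res ω s T = res ω t T) : RTEquiv s t := by
  intro tr
  induction tr generalizing s t with
  | nil => intro N; simp [Pn, P1_eq_of_res_eq hs ht hsω htω hres N]
  | cons Ma tr ih =>
    intro N
    obtain ⟨M, a⟩ := Ma
    rw [Pn_cons hs, Pn_cons ht, ← P1_eq_of_res_eq hs ht hsω htω hres M]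
    split_ifs with h
    · exact ih (hs.afterD M a) (ht.afterD M a) (hsω.afterD M a) (htω.afterD M a)
        (fun T hT => res_afterD_eq_of_res_eq hs ht hsω htω hres h.1 h.2 hT) N
    · rfl

end

end Proc

/-- Two processes are testing equivalent if and only if they are
probabilistically ready trace equivalent: `s ≈_T t ↔ s ≈_O t`. -/
theorem testEquiv_iff_rtEquiv {A : Type} [DecidableEq A] (ω : A)
    (s t : Proc A) (hs : Proc.WF s) (ht : Proc.WF t)
    (hsω : Proc.NoOmega ω s) (htω : Proc.NoOmega ω t) :
    Proc.TestEquiv ω s t ↔ Proc.RTEquiv s t := by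
  rw [Proc.testEquiv_iff_res_eq]
  exact ⟨Proc.rtEquiv_of_res_eq hs ht hsω htω, fun h _ hT => h.res_eq hs ht hT⟩
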